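/- Let g(0,·) and g(1,·) be continuous strictly increasing functions from a common interval S to ℝ, and let ε be a random variable supported in S. Define the potential outcomes Y_d = g(d, ε) for d ∈ {0,1} and let F_d denote the CDF of Y_d. Then rank invariance holds: F_1(Y_1) = F_0(Y_0) almost surely. -/
import Mathlib


open MeasureTheory

/-- Rank invariance: if `g d` is continuous and strictly increasing on the interval `S`
and `ε` takes values in `S`, then `F 1 (Y 1) = F 0 (Y 0)` almost surely, where
`Y d = g d ∘ ε` and `F d` is the CDF of `Y d`. -/
theorem rank_invariance
    {Ω : Type*} [MeasurableSpace Ω] (P : Measure Ω) [IsProbabilityMeasure P]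
    (S : Set ℝ) (hS : S.OrdConnected)
    (g : Fin 2 → ℝ → ℝ)
    (hgc : ∀ d, ContinuousOn (g d) S)
    (hgm : ∀ d, StrictMonoOn (g d) S)
    (ε : Ω → ℝ) (hεm : Measurable ε) (hεS : ∀ ω, ε ω ∈ S)
    (F : Fin 2 → ℝ → ℝ)
    (hF : ∀ d y, F d y = (P {ω | g d (ε ω) ≤ y}).toReal) :
    ∀ᵐ ω ∂P, F 1 (g 1 (ε ω)) = F 0 (g 0 (ε ω)) := by
  refine Filter.Eventually.of_forall fun ω => ?_
  have key : ∀ d : Fin 2, {ω' | g d (ε ω') ≤ g d (ε ω)} = {ω' | ε ω' ≤ ε ω} := by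
    intro d
    ext ω'
    exact (hgm d).le_iff_le (hεS ω') (hεS ω)
  rw [hF, hF, key 1, key 0]
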